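/- arXiv:1812.10645 — 3 statements merged into one kernel-verified Lean document; each statement's English description precedes it below -/
import Mathlib

section
/- Under the setup of the two-point gradient method, if Θ is p-convex with constant c₀ and ζ = ξ + λ(ξ − ξ') for some λ ≥ 0, ξ ∈ ∂Θ(x), ξ' ∈ ∂Θ(x'), ζ ∈ ∂Θ(z), then for any x̂ ∈ D(Θ): D_ζΘ(x̂, z) − D_ξΘ(x̂, x) ≤ λ(D_ξΘ(x̂, x) − D_{ξ'}Θ(x̂, x')) + (1/(p*(2c₀)^{p*−1}))(λ + λ^{p*})‖ξ − ξ'‖^{p*}, where p* = p/(p−1). -/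
/-- Inequality (3.8): estimate for the extrapolation step of the two-point gradient
method. -/
theorem tpg_extrapolation_estimate {X : Type*} [NormedAddCommGroup X] [NormedSpace ℝ X]
    [CompleteSpace X]
    (Θ : X → ℝ) (c₀ p : ℝ) (hc₀ : 0 < c₀) (hp : 2 ≤ p)
    (pstar : ℝ) (hpstar : pstar = p / (p - 1))
    (hlem : ∀ (a b : X) (η η' : X →L[ℝ] ℝ),
      (∀ z, Θ b + η (z - b) ≤ Θ z) → (∀ z, Θ a + η' (z - a) ≤ Θ z) →
      Θ a - Θ b - η (a - b) ≤ (1 / (pstar * (2 * c₀) ^ (pstar - 1))) * ‖η - η'‖ ^ pstar)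
    (x x' z xh : X) (ξ ξ' ζ : X →L[ℝ] ℝ) (l : ℝ) (hl : 0 ≤ l)
    (hζ : ζ = ξ + l • (ξ - ξ'))
    (hξ : ∀ w, Θ x + ξ (w - x) ≤ Θ w)
    (hξ' : ∀ w, Θ x' + ξ' (w - x') ≤ Θ w)
    (hζsub : ∀ w, Θ z + ζ (w - z) ≤ Θ w) :
    (Θ xh - Θ z - ζ (xh - z)) - (Θ xh - Θ x - ξ (xh - x)) ≤
      l * ((Θ xh - Θ x - ξ (xh - x)) - (Θ xh - Θ x' - ξ' (xh - x')))
      + (1 / (pstar * (2 * c₀) ^ (pstar - 1))) * (l + l ^ pstar) * ‖ξ - ξ'‖ ^ pstar := by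
  set C := 1 / (pstar * (2 * c₀) ^ (pstar - 1)) with hC
  set N := ‖ξ - ξ'‖ ^ pstar with hN
  have h1 := hlem x z ζ ξ hζsub hξ
  have h2 := hlem x x' ξ' ξ hξ' hξ
  -- rewrite norms
  have hζξ : ζ - ξ = l • (ξ - ξ') := by rw [hζ]; abel
  have hnorm1 : ‖ζ - ξ‖ ^ pstar = l ^ pstar * N := by
    rw [hζξ, norm_smul l (ξ - ξ'), Real.norm_eq_abs, abs_of_nonneg hl, hN,
      ← Real.mul_rpow hl (norm_nonneg _)]
  have hnorm2 : ‖ξ' - ξ‖ ^ pstar = N := by rw [norm_sub_rev]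
  rw [hnorm1] at h1
  rw [hnorm2] at h2
  have h2' := mul_le_mul_of_nonneg_left h2 hl
  have happ : ∀ w : X, ζ w = ξ w + l * (ξ w - ξ' w) := by
    intro w; rw [hζ]; simp
  have e1 : ζ (xh - z) = ξ xh - ξ z + l * ((ξ xh - ξ z) - (ξ' xh - ξ' z)) := by
    rw [happ]; simp
  have e2 : ζ (x - z) = ξ x - ξ z + l * ((ξ x - ξ z) - (ξ' x - ξ' z)) := by
    rw [happ]; simp
  rw [e2] at h1
  have key : C * (l + l ^ pstar) * N = l * (C * N) + C * (l ^ pstar * N) := by ring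
  rw [e1, key]
  simp only [map_sub] at h1 h2' ⊢
  linarith
end

section
/- Let F satisfy the tangential cone condition with constant 0 ≤ η < 1 and linearization L on a ball containing z, let x̂ solve F(x̂) = y, and let ‖y − y^δ‖ ≤ δ. If ξ⁺ = ζ − μ L(z)* J_s(F(z) − y^δ) with μ ≥ 0, and Θ is p-convex with constant c₀, then D_{ξ⁺}Θ(x̂, x⁺) − D_ζΘ(x̂, z) ≤ −(1 − η − (1/p*)(μ̄₀/(2c₀))^{p*−1}) μ ‖F(z) − y^δ‖^s + (1+η) μ ‖F(z) − y^δ‖^{s−1} δ, provided μ^{p*−1}‖L(z)* J_s(F(z) − y^δ)‖^{p*} ≤ μ̄₀^{p*−1}‖F(z) − y^δ‖^s. -/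
/-!
Splitting `ξ⁺ (x̂ - x⁺) = ξ⁺ (z - x⁺) + ξ⁺ (x̂ - z)` gives the three-point identity
`D_{ξ⁺}Θ(x̂, x⁺) - D_ζΘ(x̂, z) = D_{ξ⁺}Θ(z, x⁺) + μ ⟨J_s(r), L(z)(x̂ - z)⟩` with `r = F(z) - y^δ`.
The Bregman term is controlled by p-convexity and the step-size condition. For the pairing,
the tangential cone condition replaces `L(z)(x̂ - z)` by `(y - y^δ) - r` up to an error of size
`η ‖F(x̂) - F(z)‖ ≤ η (δ + ‖r‖)`, and `⟨J_s(r), r⟩ = ‖J_s(r)‖ ‖r‖ = ‖r‖^s` yields the descent.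
-/

open ContinuousLinearMap

section Bregman

variable {X : Type*} [NormedAddCommGroup X] [NormedSpace ℝ X]

/-- The Bregman distance `D_ξ Θ(x, y)`, for `ξ ∈ ∂Θ(y)`. -/
def bregmanDist (Θ : X → ℝ) (ξ : X →L[ℝ] ℝ) (x y : X) : ℝ :=
  Θ x - Θ y - ξ (x - y)

theorem bregmanDist_sub_bregmanDist (Θ : X → ℝ) (ζ ξ : X →L[ℝ] ℝ) (x z x' : X) :
    bregmanDist Θ ξ x x' - bregmanDist Θ ζ x z = bregmanDist Θ ξ z x' + (ζ - ξ) (x - z) := by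
  have hsplit : ξ (x - x') = ξ (z - x') + ξ (x - z) := by
    rw [← map_add, sub_add_sub_cancel']
  simp only [bregmanDist, hsplit, sub_apply]
  ring

end Bregman

/- No sign condition on `a`: for `a < 0`, `a ^ w = exp (log a * w) * cos (w * π)`, and both sides
carry the same cosine factor. -/
theorem Real.div_rpow_of_pos (a : ℝ) {b : ℝ} (hb : 0 < b) (w : ℝ) :
    (a / b) ^ w = a ^ w / b ^ w := by
  rcases le_or_gt 0 a with ha | ha
  · exact Real.div_rpow ha hb.le w
  · rw [Real.rpow_def_of_neg (div_neg_of_neg_of_pos ha hb), Real.rpow_def_of_neg ha,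
      Real.rpow_def_of_pos hb, Real.log_div ha.ne hb.ne', sub_mul, Real.exp_sub]
    ring

theorem one_div_mul_mul_rpow_le {q c μ μ₀ K N : ℝ} (hq : 0 < q) (hc : 0 < c) (hμ : 0 ≤ μ)
    (hK : 0 ≤ K) (hstep : μ ^ (q - 1) * K ^ q ≤ μ₀ ^ (q - 1) * N) :
    1 / (q * c ^ (q - 1)) * (μ * K) ^ q ≤ 1 / q * (μ₀ / c) ^ (q - 1) * μ * N := by
  have hcq : 0 < c ^ (q - 1) := Real.rpow_pos_of_pos hc _
  have hμq : μ ^ q = μ * μ ^ (q - 1) := by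
    rw [← Real.rpow_one_add' hμ (by linarith), add_sub_cancel]
  calc 1 / (q * c ^ (q - 1)) * (μ * K) ^ q
      = 1 / (q * c ^ (q - 1)) * (μ * (μ ^ (q - 1) * K ^ q)) := by
        rw [Real.mul_rpow hμ hK, hμq, mul_assoc]
    _ ≤ 1 / (q * c ^ (q - 1)) * (μ * (μ₀ ^ (q - 1) * N)) := by gcongr
    _ = 1 / q * (μ₀ / c) ^ (q - 1) * μ * N := by
        rw [Real.div_rpow_of_pos μ₀ hc]
        field_simp

theorem ContinuousLinearMap.apply_le_of_norm_sub_sub_le {Y : Type*} [NormedAddCommGroup Y]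
    [NormedSpace ℝ Y] {J : Y →L[ℝ] ℝ} {e r v : Y} {η δ : ℝ} (hη : 0 ≤ η)
    (hJ : J r = ‖J‖ * ‖r‖) (he : ‖e‖ ≤ δ) (hv : ‖e - r - v‖ ≤ η * ‖e - r‖) :
    J v ≤ -(1 - η) * J r + (1 + η) * ‖J‖ * δ := by
  have hJe : J e ≤ ‖J‖ * δ :=
    (le_abs_self _).trans ((J.le_opNorm e).trans (by gcongr))
  have hJerr : -J (e - r - v) ≤ ‖J‖ * (η * (δ + ‖r‖)) := by
    refine (neg_le_abs _).trans ((J.le_opNorm _).trans ?_)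
    gcongr
    exact hv.trans (by gcongr; exact (norm_sub_le e r).trans (by gcongr))
  have hv_eq : J v = J e - J r - J (e - r - v) := by
    rw [← map_sub, ← map_sub, sub_sub_cancel]
  rw [hv_eq]
  linear_combination hJe + hJerr - η * hJ

theorem tpg_gradient_step_estimate_general {X Y : Type*} [NormedAddCommGroup X] [NormedSpace ℝ X]
    [NormedAddCommGroup Y] [NormedSpace ℝ Y]
    (Θ : X → ℝ) (c₀ p s η δ μ μ₀ pstar : ℝ)
    (hc₀ : 0 < c₀) (hp : 2 ≤ p) (hs : 1 < s) (hpstar : pstar = p / (p - 1))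
    (hη0 : 0 ≤ η) (hμ : 0 ≤ μ)
    (B : Set X) (F : X → Y) (L : X → (X →L[ℝ] Y))
    (htc : ∀ a ∈ B, ∀ b ∈ B, ‖F a - F b - L b (a - b)‖ ≤ η * ‖F a - F b‖)
    (xh z xp : X) (hxhB : xh ∈ B) (hzB : z ∈ B)
    (y yδ : Y) (hsol : F xh = y) (hnoise : ‖y - yδ‖ ≤ δ)
    (Jsr : Y →L[ℝ] ℝ) (hJnorm : ‖Jsr‖ = ‖F z - yδ‖ ^ (s - 1))
    (hJval : Jsr (F z - yδ) = ‖F z - yδ‖ ^ s)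
    (ζ ξp : X →L[ℝ] ℝ) (hξp : ξp = ζ - μ • (Jsr.comp (L z)))
    (hlem : Θ z - Θ xp - ξp (z - xp) ≤
      (1 / (pstar * (2 * c₀) ^ (pstar - 1))) * ‖ξp - ζ‖ ^ pstar)
    (hstep : μ ^ (pstar - 1) * ‖Jsr.comp (L z)‖ ^ pstar ≤
      μ₀ ^ (pstar - 1) * ‖F z - yδ‖ ^ s) :
    (Θ xh - Θ xp - ξp (xh - xp)) - (Θ xh - Θ z - ζ (xh - z)) ≤
      -(1 - η - (1 / pstar) * (μ₀ / (2 * c₀)) ^ (pstar - 1)) * μ * ‖F z - yδ‖ ^ s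
      + (1 + η) * μ * ‖F z - yδ‖ ^ (s - 1) * δ := by
  have hpstar0 : 0 < pstar := by rw [hpstar]; exact div_pos (by linarith) (by linarith)
  have hgap : ζ - ξp = μ • Jsr.comp (L z) := by rw [hξp, sub_sub_cancel]
  have hbregman : bregmanDist Θ ξp z xp ≤
      1 / pstar * (μ₀ / (2 * c₀)) ^ (pstar - 1) * μ * ‖F z - yδ‖ ^ s := by
    rw [← norm_neg, neg_sub, hgap, norm_smul, Real.norm_of_nonneg hμ] at hlem
    exact hlem.trans (one_div_mul_mul_rpow_le hpstar0 (by linarith) hμ (norm_nonneg _) hstep)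
  have hJ : Jsr (F z - yδ) = ‖Jsr‖ * ‖F z - yδ‖ := by
    rw [hJval, hJnorm, ← Real.rpow_add_one' (norm_nonneg _) (by linarith), sub_add_cancel]
  have hcone : ‖(y - yδ) - (F z - yδ) - L z (xh - z)‖ ≤ η * ‖(y - yδ) - (F z - yδ)‖ := by
    simpa only [← hsol, sub_sub_sub_cancel_right] using htc xh hxhB z hzB
  have hpairing := Jsr.apply_le_of_norm_sub_sub_le hη0 hJ hnoise hcone
  rw [hJval, hJnorm] at hpairing
  change bregmanDist Θ ξp xh xp - bregmanDist Θ ζ xh z ≤ _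
  rw [bregmanDist_sub_bregmanDist, hgap, smul_apply, comp_apply, smul_eq_mul]
  linear_combination hbregman + mul_le_mul_of_nonneg_left hpairing hμ

/-- Inequality (3.9): descent estimate for the gradient step of the two-point gradient
method. -/
theorem tpg_gradient_step_estimate {X Y : Type*} [NormedAddCommGroup X] [NormedSpace ℝ X]
    [NormedAddCommGroup Y] [NormedSpace ℝ Y]
    (Θ : X → ℝ) (c₀ p s η δ μ μ₀ pstar : ℝ)
    (hc₀ : 0 < c₀) (hp : 2 ≤ p) (hs : 1 < s) (hpstar : pstar = p / (p - 1))
    (hη0 : 0 ≤ η) (hη1 : η < 1) (hδ : 0 ≤ δ) (hμ : 0 ≤ μ)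
    (B : Set X) (F : X → Y) (L : X → (X →L[ℝ] Y))
    (htc : ∀ a ∈ B, ∀ b ∈ B, ‖F a - F b - L b (a - b)‖ ≤ η * ‖F a - F b‖)
    (xh z xp : X) (hxhB : xh ∈ B) (hzB : z ∈ B)
    (y yδ : Y) (hsol : F xh = y) (hnoise : ‖y - yδ‖ ≤ δ)
    (Jsr : Y →L[ℝ] ℝ) (hJnorm : ‖Jsr‖ = ‖F z - yδ‖ ^ (s - 1))
    (hJval : Jsr (F z - yδ) = ‖F z - yδ‖ ^ s)
    (ζ ξp : X →L[ℝ] ℝ) (hξp : ξp = ζ - μ • (Jsr.comp (L z)))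
    (hζsub : ∀ w, Θ z + ζ (w - z) ≤ Θ w)
    (hξpsub : ∀ w, Θ xp + ξp (w - xp) ≤ Θ w)
    (hlem : Θ z - Θ xp - ξp (z - xp) ≤
      (1 / (pstar * (2 * c₀) ^ (pstar - 1))) * ‖ξp - ζ‖ ^ pstar)
    (hstep : μ ^ (pstar - 1) * ‖Jsr.comp (L z)‖ ^ pstar ≤
      μ₀ ^ (pstar - 1) * ‖F z - yδ‖ ^ s) :
    (Θ xh - Θ xp - ξp (xh - xp)) - (Θ xh - Θ z - ζ (xh - z)) ≤
      -(1 - η - (1 / pstar) * (μ₀ / (2 * c₀)) ^ (pstar - 1)) * μ * ‖F z - yδ‖ ^ s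
      + (1 + η) * μ * ‖F z - yδ‖ ^ (s - 1) * δ :=
  tpg_gradient_step_estimate_general Θ c₀ p s η δ μ μ₀ pstar hc₀ hp hs hpstar hη0 hμ B F L htc xh z
    xp hxhB hzB y yδ hsol hnoise Jsr hJnorm hJval ζ ξp hξp hlem hstep
end

section
/- Let Θ be p-convex with constant c₀ (so ‖∇Θ*(ξ₁) − ∇Θ*(ξ₂)‖ ≤ (‖ξ₁−ξ₂‖/(2c₀))^{1/(p−1)}), let F satisfy the tangential cone condition with constant η < 1 and ‖L(x)‖ ≤ C₀ on the relevant ball, and let ζₙ = ξₙ + λₙ(ξₙ − ξ_{n−1}), zₙ = ∇Θ*(ζₙ), xₙ = ∇Θ*(ξₙ). If the combination parameters satisfy (1/(p*(2c₀)^{p*−1}))(λₙ^{p*} + λₙ)‖ξₙ − ξ_{n−1}‖^{p*} ≤ (c₁/ν) μₙ‖F(zₙ) − y‖^s and μₙ ≤ μ̄₁ ‖F(zₙ)−y‖^{p−s}, then ‖F(xₙ) − F(zₙ)‖ ≤ (C₀/(1−η)) (c₁ p* μ̄₁/(2c₀ν))^{1/p} ‖F(zₙ) − y‖. -/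
/-!
The tangential cone condition with `η < 1` makes `F` Lipschitz along `L`:
`‖F x - F z‖ ≤ ‖L z (x - z)‖ / (1 - η) ≤ C₀ ‖x - z‖ / (1 - η)`. The Hölder continuity of
`G = ∇Θ*` bounds `‖x - z‖` by `(λ ‖ξ - ξ'‖ / (2 c₀))^(p* - 1)`, since `ξ - ζ = -λ (ξ - ξ')`.
Finally the parameter condition together with the step-size bound `μ ≤ μ̄₁ r^(p - s)` gives
`(λ ‖ξ - ξ'‖)^(p*) ≲ r^p` for the residual `r = ‖F z - y‖`, and taking the `p`-th root turns
the exponent `p*` into `p* - 1 = p* / p`.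
-/

theorem norm_le_div_one_sub_of_norm_sub_le {E : Type*} [SeminormedAddCommGroup E]
    {u v : E} {η : ℝ} (hη : η < 1) (h : ‖u - v‖ ≤ η * ‖u‖) :
    ‖u‖ ≤ ‖v‖ / (1 - η) := by
  rw [le_div_iff₀ (sub_pos.2 hη)]
  linarith [norm_le_norm_sub_add u v]

theorem Real.HolderConjugate.sub_one_eq_one_div {p q : ℝ} (hpq : p.HolderConjugate q) :
    q - 1 = 1 / (p - 1) := by
  rw [eq_div_iff hpq.sub_one_ne_zero]
  linear_combination hpq.sub_one_mul_conj

theorem Real.HolderConjugate.rpow_sub_one_le {p q t K r : ℝ} (hpq : p.HolderConjugate q)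
    (ht : 0 ≤ t) (hK : 0 ≤ K) (hr : 0 ≤ r) (h : t ^ q ≤ K * r ^ p) :
    t ^ (q - 1) ≤ K ^ (1 / p) * r := by
  have hexp : q * (1 / p) = q - 1 := by
    have := hpq.mul_eq_add
    field_simp [hpq.ne_zero]
    linarith
  calc t ^ (q - 1) = (t ^ q) ^ (1 / p) := by rw [← Real.rpow_mul ht, hexp]
    _ ≤ (K * r ^ p) ^ (1 / p) := Real.rpow_le_rpow (by positivity) h hpq.one_div_nonneg
    _ = K ^ (1 / p) * r := by
      rw [Real.mul_rpow hK (by positivity), one_div, Real.rpow_rpow_inv hr hpq.ne_zero]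

theorem div_rpow_le_of_parameter_condition {c₀ c₁ ν μ μ₁ l d r p q s : ℝ} (hc₀ : 0 < c₀)
    (hq : 0 < q) (hc₁ : 0 ≤ c₁) (hν : 0 < ν) (hl : 0 ≤ l) (hd : 0 ≤ d) (hr : 0 ≤ r)
    (hp : p ≠ 0)
    (hparam : 1 / (q * (2 * c₀) ^ (q - 1)) * (l ^ q + l) * d ^ q ≤ c₁ / ν * μ * r ^ s)
    (hstep : μ ≤ μ₁ * r ^ (p - s)) :
    (l * d / (2 * c₀)) ^ q ≤ c₁ * q * μ₁ / (2 * c₀ * ν) * r ^ p := by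
  have hA : 0 < q * (2 * c₀) ^ (q - 1) := by positivity
  have hstep' : μ * r ^ s ≤ μ₁ * r ^ p := calc
    μ * r ^ s ≤ μ₁ * r ^ (p - s) * r ^ s := by gcongr
    _ = μ₁ * r ^ p := by
      rw [mul_assoc, ← Real.rpow_add' hr (by simpa using hp), sub_add_cancel]
  rw [Real.div_rpow (by positivity) (by positivity), div_le_iff₀ (by positivity)]
  calc (l * d) ^ q = l ^ q * d ^ q := Real.mul_rpow hl hd
    _ ≤ (l ^ q + l) * d ^ q := by gcongr; exact le_add_of_nonneg_right hl
    _ ≤ q * (2 * c₀) ^ (q - 1) * (c₁ / ν * μ * r ^ s) := by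
      rwa [mul_assoc, one_div_mul_eq_div, div_le_iff₀' hA] at hparam
    _ ≤ q * (2 * c₀) ^ (q - 1) * (c₁ / ν * (μ₁ * r ^ p)) := by rw [mul_assoc (c₁ / ν)]; gcongr
    _ = c₁ * q * μ₁ / (2 * c₀ * ν) * r ^ p * (2 * c₀) ^ q := by
      rw [Real.rpow_sub_one (by positivity)]
      field_simp

theorem residual_comparison_estimate_general {X Y : Type*} [NormedAddCommGroup X]
    [NormedSpace ℝ X] [NormedAddCommGroup Y] [NormedSpace ℝ Y]
    (c₀ p pstar c₁ ν μ₁ C₀ η l μ s : ℝ)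
    (hc₀ : 0 < c₀) (hp : 2 ≤ p) (hpstar : pstar = p / (p - 1))
    (hc₁ : 0 < c₁) (hν : 1 < ν) (hμ₁ : 0 < μ₁)
    (hη1 : η < 1) (hl : 0 ≤ l)
    (G : (X →L[ℝ] ℝ) → X)
    (hholder : ∀ a b : (X →L[ℝ] ℝ), ‖G a - G b‖ ≤ (‖a - b‖ / (2 * c₀)) ^ (1 / (p - 1)))
    (B : Set X) (F : X → Y) (L : X → (X →L[ℝ] Y))
    (htc : ∀ a ∈ B, ∀ b ∈ B, ‖F a - F b - L b (a - b)‖ ≤ η * ‖F a - F b‖)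
    (hLb : ∀ a ∈ B, ‖L a‖ ≤ C₀)
    (ξ ξ' ζ : X →L[ℝ] ℝ) (x z : X) (y : Y)
    (hζ : ζ = ξ + l • (ξ - ξ')) (hz : z = G ζ) (hx : x = G ξ)
    (hxB : x ∈ B) (hzB : z ∈ B)
    (hparam : (1 / (pstar * (2 * c₀) ^ (pstar - 1))) * (l ^ pstar + l) * ‖ξ - ξ'‖ ^ pstar
      ≤ (c₁ / ν) * μ * ‖F z - y‖ ^ s)
    (hstepsize : μ ≤ μ₁ * ‖F z - y‖ ^ (p - s)) :
    ‖F x - F z‖ ≤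
      (C₀ / (1 - η)) * (c₁ * pstar * μ₁ / (2 * c₀ * ν)) ^ (1 / p) * ‖F z - y‖ := by
  have hpq : p.HolderConjugate pstar :=
    (Real.holderConjugate_iff_eq_conjExponent (by linarith)).2 hpstar
  have hq : 0 < pstar := hpq.symm.pos
  have hC₀ : 0 ≤ C₀ := (norm_nonneg _).trans (hLb z hzB)
  set r := ‖F z - y‖
  set K := c₁ * pstar * μ₁ / (2 * c₀ * ν)
  have hξζ : ‖ξ - ζ‖ = l * ‖ξ - ξ'‖ := by
    rw [hζ, sub_add_cancel_left, norm_neg, norm_smul, Real.norm_of_nonneg hl]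
  have hxz : ‖x - z‖ ≤ K ^ (1 / p) * r := calc
    ‖x - z‖ ≤ (l * ‖ξ - ξ'‖ / (2 * c₀)) ^ (pstar - 1) := by
      rw [hx, hz, ← hξζ, hpq.sub_one_eq_one_div]
      exact hholder ξ ζ
    _ ≤ K ^ (1 / p) * r :=
      hpq.rpow_sub_one_le (by positivity) (by positivity) (norm_nonneg _)
        (div_rpow_le_of_parameter_condition hc₀ hq hc₁.le (by linarith) hl
          (norm_nonneg _) (norm_nonneg _) hpq.ne_zero hparam hstepsize)
  calc ‖F x - F z‖ ≤ ‖L z (x - z)‖ / (1 - η) :=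
        norm_le_div_one_sub_of_norm_sub_le hη1 (htc x hxB z hzB)
    _ ≤ C₀ * ‖x - z‖ / (1 - η) := by
        gcongr
        exact (L z).le_of_opNorm_le (hLb z hzB) _
    _ ≤ C₀ * (K ^ (1 / p) * r) / (1 - η) := by gcongr
    _ = C₀ / (1 - η) * K ^ (1 / p) * r := by ring

/-- Key chain (3.24) of Theorem 3.7: `‖F(xₙ) − F(zₙ)‖` is controlled by the residual
`‖F(zₙ) − y‖`. -/
theorem residual_comparison_estimate {X Y : Type*} [NormedAddCommGroup X]
    [NormedSpace ℝ X] [NormedAddCommGroup Y] [NormedSpace ℝ Y]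
    (Θ : X → ℝ) (c₀ p pstar c₁ ν μ₁ C₀ η l μ s : ℝ)
    (hc₀ : 0 < c₀) (hp : 2 ≤ p) (hpstar : pstar = p / (p - 1))
    (hc₁ : 0 < c₁) (hν : 1 < ν) (hμ₁ : 0 < μ₁) (hC₀ : 0 < C₀)
    (hη0 : 0 ≤ η) (hη1 : η < 1) (hl : 0 ≤ l) (hμ : 0 ≤ μ) (hs : 1 < s)
    (G : (X →L[ℝ] ℝ) → X)
    (hholder : ∀ a b : (X →L[ℝ] ℝ), ‖G a - G b‖ ≤ (‖a - b‖ / (2 * c₀)) ^ (1 / (p - 1)))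
    (B : Set X) (F : X → Y) (L : X → (X →L[ℝ] Y))
    (htc : ∀ a ∈ B, ∀ b ∈ B, ‖F a - F b - L b (a - b)‖ ≤ η * ‖F a - F b‖)
    (hLb : ∀ a ∈ B, ‖L a‖ ≤ C₀)
    (ξ ξ' ζ : X →L[ℝ] ℝ) (x z : X) (y : Y)
    (hζ : ζ = ξ + l • (ξ - ξ')) (hz : z = G ζ) (hx : x = G ξ)
    (hxB : x ∈ B) (hzB : z ∈ B)
    (hparam : (1 / (pstar * (2 * c₀) ^ (pstar - 1))) * (l ^ pstar + l) * ‖ξ - ξ'‖ ^ pstar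
      ≤ (c₁ / ν) * μ * ‖F z - y‖ ^ s)
    (hstepsize : μ ≤ μ₁ * ‖F z - y‖ ^ (p - s)) :
    ‖F x - F z‖ ≤
      (C₀ / (1 - η)) * (c₁ * pstar * μ₁ / (2 * c₀ * ν)) ^ (1 / p) * ‖F z - y‖ :=
  residual_comparison_estimate_general c₀ p pstar c₁ ν μ₁ C₀ η l μ s hc₀ hp hpstar hc₁ hν hμ₁ hη1 hl
    G hholder B F L htc hLb ξ ξ' ζ x z y hζ hz hx hxB hzB hparam hstepsize
end
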